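/- arXiv:2605.08015 — 4 statements merged into one kernel-verified Lean document; each statement's English description precedes it below -/
import Mathlib

section
/- Let d > 0, c ≥ 1, σ > 0, ε ∈ (0,1), and define d_ε = d/√(−ln ε) and κ_ε = d_ε/(√2 σ). Define for δ ≥ 0 the threshold α(δ) = d/(δ + c), and the EVaR E = inf{δ ≥ 0 : d − α(δ) ≥ σ√(−2 ln ε)}. Then: (i) if κ_ε ≥ c/(c−1) (with c > 1), then E = 0; (ii) if 1 < κ_ε < c/(c−1), then E = 1/(1 − 1/κ_ε) − c; (iii) if κ_ε ≤ 1 then the feasibility set is empty (E = +∞, i.e. no δ ≥ 0 satisfies the condition). -/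
open Set

/-- Closed form of the entropic value-at-risk of inter-vehicle collision.
With `α(δ) = d/(δ + c)`, `E = inf {δ ≥ 0 : d - α(δ) ≥ σ √(-2 ln ε)}`,
`d_ε = d/√(-ln ε)` and `κ_ε = d_ε/(√2 σ)`:
(i) if `c > 1` and `κ_ε ≥ c/(c-1)` then `E = 0`;
(ii) if `1 < κ_ε < c/(c-1)` then `E = 1/(1 - 1/κ_ε) - c`;
(iii) if `κ_ε ≤ 1` then the feasible set is empty. -/
theorem evar_closed_form (d c σ ε dε κ : ℝ)
    (hd : 0 < d) (hc : 1 ≤ c) (hσ : 0 < σ) (hε : ε ∈ Ioo (0 : ℝ) 1)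
    (hdε : dε = d / Real.sqrt (-Real.log ε))
    (hκ : κ = dε / (Real.sqrt 2 * σ)) :
    ((1 < c → c / (c - 1) ≤ κ →
        sInf {δ : ℝ | 0 ≤ δ ∧ σ * Real.sqrt (-2 * Real.log ε) ≤ d - d / (δ + c)}
          = 0) ∧
     (1 < κ → κ < c / (c - 1) →
        sInf {δ : ℝ | 0 ≤ δ ∧ σ * Real.sqrt (-2 * Real.log ε) ≤ d - d / (δ + c)}
          = 1 / (1 - 1 / κ) - c) ∧
     (κ ≤ 1 →
        {δ : ℝ | 0 ≤ δ ∧ σ * Real.sqrt (-2 * Real.log ε) ≤ d - d / (δ + c)}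
          = ∅)) := by
  obtain ⟨hε0, hε1⟩ := hε
  have hlog : 0 < -Real.log ε := by
    have := Real.log_neg hε0 hε1; linarith
  have hL : 0 < Real.sqrt (-Real.log ε) := Real.sqrt_pos.mpr hlog
  have hs2 : 0 < Real.sqrt 2 := Real.sqrt_pos.mpr (by norm_num)
  have hκ0 : 0 < κ := by
    rw [hκ, hdε]; positivity
  have hσs : σ * Real.sqrt (-2 * Real.log ε) = d / κ := by
    have h2 : (-2 : ℝ) * Real.log ε = 2 * (-Real.log ε) := by ring
    rw [h2, Real.sqrt_mul (by norm_num : (0:ℝ) ≤ 2), hκ, hdε]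
    field_simp
  have key : ∀ x : ℝ, 0 < x → (d / κ ≤ d - d / x ↔ κ ≤ (κ - 1) * x) := by
    intro x hx
    rw [le_sub_iff_add_le, div_add_div _ _ (ne_of_gt hκ0) (ne_of_gt hx),
      div_le_iff₀ (by positivity)]
    constructor <;> intro h <;> nlinarith [mul_pos hκ0 hx]
  -- set membership characterization
  have hmem : ∀ δ : ℝ, (0 ≤ δ ∧ σ * Real.sqrt (-2 * Real.log ε) ≤ d - d / (δ + c))
      ↔ (0 ≤ δ ∧ κ ≤ (κ - 1) * (δ + c)) := by
    intro δ
    constructor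
    · rintro ⟨h0, h1⟩
      exact ⟨h0, (key (δ + c) (by linarith)).mp (hσs ▸ h1)⟩
    · rintro ⟨h0, h1⟩
      refine ⟨h0, ?_⟩
      rw [hσs]
      exact (key (δ + c) (by linarith)).mpr h1
  refine ⟨?_, ?_, ?_⟩
  · -- case (i)
    intro hc1 hκc
    have hcc : 1 < c / (c - 1) := by
      rw [lt_div_iff₀ (by linarith)]; linarith
    have hκ1 : 1 < κ := lt_of_lt_of_le hcc hκc
    have ht : κ ≤ (κ - 1) * c := by
      rw [div_le_iff₀ (by linarith : (0:ℝ) < c - 1)] at hκc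
      nlinarith
    have hS : {δ : ℝ | 0 ≤ δ ∧ σ * Real.sqrt (-2 * Real.log ε) ≤ d - d / (δ + c)} = Ici 0 := by
      ext δ
      simp only [mem_setOf_eq, mem_Ici, hmem δ]
      constructor
      · exact fun h => h.1
      · intro h0
        refine ⟨h0, ?_⟩
        nlinarith
    rw [hS, csInf_Ici]
  · -- case (ii)
    intro hκ1 hκc
    have hκ1' : 0 < κ - 1 := by linarith
    have ht : 1 / (1 - 1 / κ) - c = κ / (κ - 1) - c := by
      rw [one_sub_div (ne_of_gt hκ0), one_div_div]
    have hS : {δ : ℝ | 0 ≤ δ ∧ σ * Real.sqrt (-2 * Real.log ε) ≤ d - d / (δ + c)}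
        = Ici (κ / (κ - 1) - c) := by
      ext δ
      simp only [mem_setOf_eq, mem_Ici, hmem δ]
      rw [sub_le_iff_le_add, div_le_iff₀ hκ1']
      constructor
      · rintro ⟨_, h⟩; linarith [h]
      · intro h
        have hc1 : 1 < c := by
          rcases lt_or_eq_of_le hc with hlt | heq
          · exact hlt
          · exfalso
            rw [← heq] at hκc
            norm_num at hκc
            linarith
        have h0 : 0 ≤ δ := by
          rw [lt_div_iff₀ (by linarith : (0:ℝ) < c - 1)] at hκc
          nlinarith
        exact ⟨h0, by nlinarith⟩
    rw [hS, csInf_Ici, ht]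
  · -- case (iii)
    intro hκle
    ext δ
    simp only [mem_setOf_eq, mem_empty_iff_false, iff_false, not_and]
    intro h0
    rw [hσs]
    intro h
    have := (key (δ + c) (by linarith)).mp h
    nlinarith
end

section
/- Let X ~ N(d, σ²) with d > 0, σ > 0, c ≥ 1, ε ∈ (0,1), and suppose the standard-deviation bounds σ_min ≤ σ ≤ σ_max hold with σ_min, σ_max > 0. Define κ(s) = d/(√(−ln ε)·√2·s) and, for s with 1 < κ(s), E(s) = max(0, 1/(1 − 1/κ(s)) − c). If 1 < κ(σ_max), then E(σ_min) ≤ E(σ) ≤ E(σ_max). -/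
open Set

/-- Network-induced EVaR bounds: with `κ(s) = d/(√(-ln ε) √2 s)` and truncated EVaR
`E(s) = max 0 (1/(1 - 1/κ(s)) - c)`, if `σ_min ≤ σ ≤ σ_max` and `1 < κ(σ_max)`, then
`E(σ_min) ≤ E(σ) ≤ E(σ_max)`. -/
theorem evar_network_bounds (d c σ ε σmin σmax : ℝ)
    (hd : 0 < d) (hσ : 0 < σ) (hc : 1 ≤ c) (hε : ε ∈ Ioo (0 : ℝ) 1)
    (hσmin : 0 < σmin) (hσmax : 0 < σmax)
    (hlo : σmin ≤ σ) (hhi : σ ≤ σmax)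
    (κ : ℝ → ℝ) (hκ : κ = fun s => d / (Real.sqrt (-Real.log ε) * Real.sqrt 2 * s))
    (E : ℝ → ℝ) (hE : E = fun s => max 0 (1 / (1 - 1 / κ s) - c))
    (hmax : 1 < κ σmax) :
    E σmin ≤ E σ ∧ E σ ≤ E σmax := by
  have ha : 0 < Real.sqrt (-Real.log ε) * Real.sqrt 2 := by
    have hlog : Real.log ε < 0 := Real.log_neg hε.1 hε.2
    have : 0 < -Real.log ε := by linarith
    positivity
  set a := Real.sqrt (-Real.log ε) * Real.sqrt 2 with haa
  -- κ is antitone on positives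
  have hκanti : ∀ s t : ℝ, 0 < s → s ≤ t → κ t ≤ κ s := by
    intro s t hs hst
    simp only [hκ]
    exact div_le_div_of_nonneg_left hd.le (by positivity) (by nlinarith)
  have key : ∀ s t : ℝ, 0 < s → s ≤ t → t ≤ σmax → E s ≤ E t := by
    intro s t hs hst htmax
    have ht : 0 < t := lt_of_lt_of_le hs hst
    have hκt : 1 < κ t := lt_of_lt_of_le hmax (hκanti t σmax ht htmax)
    have hκs : 1 < κ s := lt_of_lt_of_le hκt (hκanti s t hs hst)
    have h1 : 1 / κ s ≤ 1 / κ t :=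
      one_div_le_one_div_of_le (by linarith) (hκanti s t hs hst)
    have h2 : 0 < 1 - 1 / κ t := by
      have : 1 / κ t < 1 := by
        rw [div_lt_one (by linarith)]; exact hκt
      linarith
    have h3 : 1 - 1 / κ t ≤ 1 - 1 / κ s := by linarith
    have h4 : 1 / (1 - 1 / κ s) ≤ 1 / (1 - 1 / κ t) :=
      one_div_le_one_div_of_le h2 h3
    simp only [hE]
    exact max_le_max le_rfl (by linarith)
  exact ⟨key σmin σ hσmin hlo hhi, key σ σmax hσ hhi le_rfl⟩
end

section
/- Donsker–Varadhan variational formula: if P is a probability measure and X is a bounded measurable real function on the underlying space, then ln E_P[e^X] = sup over probability measures Q absolutely continuous with respect to P of (E_Q[X] − KL(Q‖P)), where KL denotes the Kullback–Leibler divergence. -/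
open MeasureTheory Real
open scoped ENNReal

/-- Donsker–Varadhan variational formula: for a probability measure `P` and a bounded
measurable `X`, `ln E_P[e^X]` equals the supremum over probability measures `Q ≪ P`
(with finite KL divergence) of `E_Q[X] - KL(Q‖P)`, where
`KL(Q‖P) = ∫ ln (dQ/dP) dQ`. -/
theorem donsker_varadhan
    {Ω : Type*} [MeasurableSpace Ω] (P : Measure Ω) [IsProbabilityMeasure P]
    (X : Ω → ℝ) (hX : Measurable X) (C : ℝ) (hbdd : ∀ ω, |X ω| ≤ C) :
    Real.log (∫ ω, Real.exp (X ω) ∂P)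
      = sSup {y : ℝ | ∃ Q : Measure Ω, IsProbabilityMeasure Q ∧ Q ≪ P ∧
          Integrable (fun ω => Real.log ((Q.rnDeriv P ω).toReal)) Q ∧
          y = ∫ ω, X ω ∂Q - ∫ ω, Real.log ((Q.rnDeriv P ω).toReal) ∂Q} := by
  set Z := ∫ ω, Real.exp (X ω) ∂P with hZdef
  -- X is integrable with respect to any probability measure
  have hXint : ∀ (Q : Measure Ω), IsProbabilityMeasure Q → Integrable X Q := by
    intro Q hQ
    exact (integrable_const C).mono' hX.aestronglyMeasurable
      (Filter.Eventually.of_forall fun ω => by simpa using hbdd ω)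
  -- exp ∘ X is integrable with respect to P
  have heXint : Integrable (fun ω => Real.exp (X ω)) P := by
    refine (integrable_const (Real.exp C)).mono' (hX.exp).aestronglyMeasurable
      (Filter.Eventually.of_forall fun ω => ?_)
    rw [Real.norm_eq_abs, abs_of_pos (Real.exp_pos _)]
    exact Real.exp_le_exp.2 ((abs_le.1 (hbdd ω)).2)
  have hZpos : 0 < Z := by
    have h1 : (0:ℝ) < ∫ _ω, Real.exp (-C) ∂P := by
      simp [Real.exp_pos]
    refine lt_of_lt_of_le h1 ?_
    refine integral_mono (integrable_const _) heXint fun ω => ?_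
    exact Real.exp_le_exp.2 (abs_le.1 (hbdd ω)).1
  refine (IsGreatest.csSup_eq ?_).symm
  constructor
  · -- the Gibbs measure attains the value log Z
    set f : Ω → ℝ≥0∞ := fun ω => ENNReal.ofReal (Real.exp (X ω) / Z) with hfdef
    have hfmeas : Measurable f := (hX.exp.div_const Z).ennreal_ofReal
    set Q := P.withDensity f with hQdef
    have hac : Q ≪ P := withDensity_absolutelyContinuous P f
    have hQprob : IsProbabilityMeasure Q := by
      constructor
      rw [hQdef, withDensity_apply _ MeasurableSet.univ, setLIntegral_univ]
      have : ∫⁻ ω, f ω ∂P = ENNReal.ofReal (∫ ω, Real.exp (X ω) / Z ∂P) := by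
        rw [ofReal_integral_eq_lintegral_ofReal (heXint.div_const Z)
          (Filter.Eventually.of_forall fun ω => div_nonneg (Real.exp_pos _).le hZpos.le)]
      rw [this, integral_div, ← hZdef, div_self hZpos.ne', ENNReal.ofReal_one]
    have hrn : Q.rnDeriv P =ᵐ[P] f := Measure.rnDeriv_withDensity P hfmeas
    have hlogP : ∀ᵐ ω ∂P, Real.log ((Q.rnDeriv P ω).toReal) = X ω - Real.log Z := by
      filter_upwards [hrn] with ω h
      rw [h, hfdef, ENNReal.toReal_ofReal (div_nonneg (Real.exp_pos _).le hZpos.le),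
        Real.log_div (Real.exp_ne_zero _) hZpos.ne', Real.log_exp]
    have hlogQ : ∀ᵐ ω ∂Q, Real.log ((Q.rnDeriv P ω).toReal) = X ω - Real.log Z :=
      hac.ae_le hlogP
    have hintQ : Integrable (fun ω => Real.log ((Q.rnDeriv P ω).toReal)) Q := by
      refine ((hXint Q hQprob).sub (integrable_const (Real.log Z))).congr ?_
      filter_upwards [hlogQ] with ω h using h.symm
    refine ⟨Q, hQprob, hac, hintQ, ?_⟩
    have : ∫ ω, Real.log ((Q.rnDeriv P ω).toReal) ∂Q
        = ∫ ω, (X ω - Real.log Z) ∂Q := integral_congr_ae hlogQ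
    rw [this, integral_sub (hXint Q hQprob) (integrable_const _), integral_const]
    simp
  · -- upper bound
    rintro y ⟨Q, hQprob, hac, hint, rfl⟩
    set r : Ω → ℝ := fun ω => (Q.rnDeriv P ω).toReal with hrdef
    have hrmeas : Measurable r := (Measure.measurable_rnDeriv Q P).ennreal_toReal
    set g : Ω → ℝ := fun ω => Real.exp (X ω) / r ω with hgdef
    have hgmeas : Measurable g := hX.exp.div hrmeas
    have hgnn : ∀ ω, 0 ≤ g ω := fun ω => div_nonneg (Real.exp_pos _).le ENNReal.toReal_nonneg
    have hrpos : ∀ᵐ ω ∂Q, 0 < r ω := by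
      filter_upwards [Measure.rnDeriv_pos hac, hac.ae_le (Measure.rnDeriv_lt_top Q P)]
        with ω h1 h2
      exact ENNReal.toReal_pos h1.ne' h2.ne
    have hgpos : ∀ᵐ ω ∂Q, 0 < g ω := by
      filter_upwards [hrpos] with ω h using div_pos (Real.exp_pos _) h
    have hglog : ∀ᵐ ω ∂Q, Real.log (g ω) = X ω - Real.log (r ω) := by
      filter_upwards [hrpos] with ω h
      rw [hgdef]
      simp only
      rw [Real.log_div (Real.exp_ne_zero _) h.ne', Real.log_exp]
    -- lintegral bound
    have hlint : ∫⁻ ω, ENNReal.ofReal (g ω) ∂Q ≤ ENNReal.ofReal Z := by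
      rw [← lintegral_rnDeriv_mul hac hgmeas.ennreal_ofReal.aemeasurable]
      have hbound : ∀ᵐ ω ∂P,
          Q.rnDeriv P ω * ENNReal.ofReal (g ω) ≤ ENNReal.ofReal (Real.exp (X ω)) := by
        filter_upwards [Measure.rnDeriv_lt_top Q P] with ω hlt
        rcases eq_or_ne (Q.rnDeriv P ω) 0 with h0 | h0
        · simp [h0]
        · have hpos : 0 < r ω := ENNReal.toReal_pos h0 hlt.ne
          have : Q.rnDeriv P ω = ENNReal.ofReal (r ω) := by
            rw [hrdef]; simp [ENNReal.ofReal_toReal hlt.ne]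
          rw [this, ← ENNReal.ofReal_mul ENNReal.toReal_nonneg]
          refine ENNReal.ofReal_le_ofReal ?_
          rw [hgdef]
          rw [mul_div_cancel₀ _ hpos.ne']
      calc ∫⁻ ω, Q.rnDeriv P ω * ENNReal.ofReal (g ω) ∂P
          ≤ ∫⁻ ω, ENNReal.ofReal (Real.exp (X ω)) ∂P := lintegral_mono_ae hbound
        _ = ENNReal.ofReal Z := by
            rw [← ofReal_integral_eq_lintegral_ofReal heXint
              (Filter.Eventually.of_forall fun ω => (Real.exp_pos _).le)]
    have hgint : Integrable g Q := by
      refine ⟨hgmeas.aestronglyMeasurable, ?_⟩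
      rw [hasFiniteIntegral_iff_ofReal (Filter.Eventually.of_forall hgnn)]
      exact lt_of_le_of_lt hlint ENNReal.ofReal_lt_top
    set c := ∫ ω, g ω ∂Q with hcdef
    have hcnn : 0 ≤ c := integral_nonneg hgnn
    have hcZ : c ≤ Z := by
      have : ENNReal.ofReal c = ∫⁻ ω, ENNReal.ofReal (g ω) ∂Q :=
        ofReal_integral_eq_lintegral_ofReal hgint (Filter.Eventually.of_forall hgnn)
      have h2 : ENNReal.ofReal c ≤ ENNReal.ofReal Z := this ▸ hlint
      exact (ENNReal.ofReal_le_ofReal_iff hZpos.le).1 h2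
    have hcpos : 0 < c := by
      rcases hcnn.lt_or_eq with h | h
      · exact h
      · exfalso
        have hzero : g =ᵐ[Q] 0 :=
          (integral_eq_zero_iff_of_nonneg hgnn hgint).1 h.symm
        have : ∀ᵐ _ω ∂Q, False := by
          filter_upwards [hzero, hgpos] with ω h1 h2
          rw [h1] at h2; exact lt_irrefl _ h2
        have hne : (ae Q).NeBot := ae_neBot.2 (IsProbabilityMeasure.ne_zero Q)
        exact this.exists.choose_spec
    -- Jensen-type pointwise bound
    have hkey : ∀ᵐ ω ∂Q, Real.log (g ω) ≤ g ω / c - 1 + Real.log c := by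
      filter_upwards [hgpos] with ω h
      have := Real.log_le_sub_one_of_pos (div_pos h hcpos)
      rw [Real.log_div h.ne' hcpos.ne'] at this
      linarith
    have hloggint : Integrable (fun ω => Real.log (g ω)) Q := by
      refine ((hXint Q hQprob).sub hint).congr ?_
      filter_upwards [hglog] with ω h using h.symm
    have hrhsint : Integrable (fun ω => g ω / c - 1 + Real.log c) Q :=
      ((hgint.div_const c).sub (integrable_const 1)).add (integrable_const _)
    have hineq : ∫ ω, Real.log (g ω) ∂Q ≤ Real.log c := by
      calc ∫ ω, Real.log (g ω) ∂Q
          ≤ ∫ ω, (g ω / c - 1 + Real.log c) ∂Q := integral_mono_ae hloggint hrhsint hkey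
        _ = Real.log c := by
            have i0 : Integrable (fun ω => g ω / c) Q := hgint.div_const c
            have i1 : Integrable (fun ω => g ω / c - 1) Q := i0.sub (integrable_const 1)
            rw [integral_add i1 (integrable_const (Real.log c)),
              integral_sub i0 (integrable_const 1), integral_div, ← hcdef,
              div_self hcpos.ne']
            simp
    have hsplit : ∫ ω, X ω ∂Q - ∫ ω, Real.log ((Q.rnDeriv P ω).toReal) ∂Q
        = ∫ ω, Real.log (g ω) ∂Q := by
      rw [← integral_sub (hXint Q hQprob) hint]
      exact (integral_congr_ae (by filter_upwards [hglog] with ω h using h)).symm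
    rw [hsplit]
    exact hineq.trans ((Real.log_le_log_iff hcpos hZpos).2 hcZ)
end

section
/- Let P be a probability measure, X a bounded measurable real random variable, and ε ∈ (0,1). Then inf_{s>0} (1/s)(ln E_P[e^{−sX}] − ln ε) ≥ sup{E_Q[−X] : Q ≪ P, KL(Q‖P) ≤ −ln ε}. -/
open MeasureTheory Real

/-- Donsker–Varadhan lower bound (one direction of the Gibbs variational principle):
for a probability measure `Q ≪ P` with integrable log-density,
`∫ g dQ - KL(Q‖P) ≤ log ∫ e^g dP` for bounded measurable `g`. -/
lemma dv_aux {Ω : Type*} [MeasurableSpace Ω] (P Q : Measure Ω)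
    [IsProbabilityMeasure P] [IsProbabilityMeasure Q] (hQP : Q ≪ P)
    (g : Ω → ℝ) (hg : Measurable g) (B : ℝ) (hB : ∀ ω, |g ω| ≤ B)
    (hL : Integrable (fun ω => Real.log ((Q.rnDeriv P ω).toReal)) Q) :
    (∫ ω, g ω ∂Q) - (∫ ω, Real.log ((Q.rnDeriv P ω).toReal) ∂Q)
      ≤ Real.log (∫ ω, Real.exp (g ω) ∂P) := by
  set f : Ω → ENNReal := Q.rnDeriv P with hf
  have hfm : Measurable f := Measure.measurable_rnDeriv Q P
  set L : Ω → ℝ := fun ω => Real.log ((f ω).toReal) with hLdef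
  have hLm : Measurable L := (Real.measurable_log).comp hfm.ennreal_toReal
  set h : Ω → ℝ := fun ω => Real.exp (g ω - L ω) with hhdef
  have hhm : Measurable h := ((hg.sub hLm)).exp
  have hQd : P.withDensity f = Q := Measure.withDensity_rnDeriv_eq Q P hQP
  -- key pointwise bound P-a.e.
  have hae : ∀ᵐ ω ∂P, ENNReal.ofReal (h ω) * f ω ≤ ENNReal.ofReal (Real.exp (g ω)) := by
    filter_upwards [Measure.rnDeriv_lt_top Q P] with ω hlt
    rcases eq_or_ne (f ω) 0 with h0 | h0
    · simp [h0]
    · have ht : 0 < (f ω).toReal := ENNReal.toReal_pos h0 hlt.ne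
      have hne : f ω ≠ ⊤ := hlt.ne
      have hft : f ω = ENNReal.ofReal ((f ω).toReal) := (ENNReal.ofReal_toReal hne).symm
      have hh : h ω = Real.exp (g ω) / (f ω).toReal := by
        rw [hhdef]
        simp only [hLdef]
        rw [Real.exp_sub, Real.exp_log ht]
      calc ENNReal.ofReal (h ω) * f ω
          = ENNReal.ofReal (Real.exp (g ω) / (f ω).toReal * (f ω).toReal) := by
            rw [hh, ENNReal.ofReal_mul (by positivity), ← hft]
        _ = ENNReal.ofReal (Real.exp (g ω)) := by rw [div_mul_cancel₀ _ ht.ne']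
      exact le_refl _
  -- lintegral computation
  have hlin : ∫⁻ ω, ENNReal.ofReal (h ω) ∂Q ≤ ∫⁻ ω, ENNReal.ofReal (Real.exp (g ω)) ∂P := by
    rw [← hQd, lintegral_withDensity_eq_lintegral_mul _ hfm (hhm.ennreal_ofReal)]
    refine lintegral_mono_ae ?_
    filter_upwards [hae] with ω hω
    simpa [mul_comm] using hω
  have hexp_top : ∫⁻ ω, ENNReal.ofReal (Real.exp (g ω)) ∂P < ⊤ := by
    calc ∫⁻ ω, ENNReal.ofReal (Real.exp (g ω)) ∂P
        ≤ ∫⁻ _, ENNReal.ofReal (Real.exp B) ∂P := by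
          refine lintegral_mono fun ω => ENNReal.ofReal_le_ofReal ?_
          exact Real.exp_le_exp.mpr ((le_abs_self _).trans (hB ω))
      _ = ENNReal.ofReal (Real.exp B) := by simp
      _ < ⊤ := ENNReal.ofReal_lt_top
  -- integrability of h under Q
  have hhint : Integrable h Q := by
    refine ⟨hhm.aestronglyMeasurable, ?_⟩
    rw [hasFiniteIntegral_iff_ofReal (Filter.Eventually.of_forall fun ω => (Real.exp_pos _).le)]
    exact lt_of_le_of_lt hlin hexp_top
  -- integrability of g under Q
  have hgint : Integrable g Q :=
    (integrable_const B).mono' hg.aestronglyMeasurable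
      (Filter.Eventually.of_forall fun ω => by simpa using hB ω)
  have hsub : Integrable (fun ω => g ω - L ω) Q := hgint.sub hL
  -- Jensen for exp
  have hjen : Real.exp (∫ ω, (g ω - L ω) ∂Q) ≤ ∫ ω, Real.exp (g ω - L ω) ∂Q := by
    have := convexOn_exp.map_integral_le (μ := Q) (f := fun ω => g ω - L ω)
      Real.continuous_exp.continuousOn isClosed_univ
      (Filter.Eventually.of_forall fun ω => Set.mem_univ _) hsub ?_
    · exact this
    · exact hhint
  -- ∫ h dQ ≤ ∫ exp g dP
  have hInt2 : ∫ ω, Real.exp (g ω - L ω) ∂Q ≤ ∫ ω, Real.exp (g ω) ∂P := by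
    rw [integral_eq_lintegral_of_nonneg_ae (Filter.Eventually.of_forall fun ω => (Real.exp_pos _).le)
        hhm.aestronglyMeasurable,
      integral_eq_lintegral_of_nonneg_ae (Filter.Eventually.of_forall fun ω => (Real.exp_pos _).le)
        (hg.exp).aestronglyMeasurable]
    exact ENNReal.toReal_mono hexp_top.ne hlin
  have hpos : 0 < ∫ ω, Real.exp (g ω) ∂P :=
    lt_of_lt_of_le (Real.exp_pos _) (hjen.trans hInt2)
  have := Real.log_le_log (Real.exp_pos _) (hjen.trans hInt2)
  rwa [Real.log_exp, integral_sub hgint hL] at this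


/-- One direction of EVaR duality: the Chernoff-based EVaR objective
`inf_{s>0} (1/s)(ln E_P[e^{-sX}] - ln ε)` dominates the worst-case expectation
`sup {E_Q[-X] : Q ≪ P, KL(Q‖P) ≤ -ln ε}` over the KL ball of radius `-ln ε`. -/
theorem evar_duality_lower_bound
    {Ω : Type*} [MeasurableSpace Ω] (P : Measure Ω) [IsProbabilityMeasure P]
    (X : Ω → ℝ) (hX : Measurable X) (C : ℝ) (hbdd : ∀ ω, |X ω| ≤ C)
    (ε : ℝ) (hε : ε ∈ Set.Ioo (0 : ℝ) 1) :
    sSup {y : EReal | ∃ Q : Measure Ω, IsProbabilityMeasure Q ∧ Q ≪ P ∧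
          Integrable (fun ω => Real.log ((Q.rnDeriv P ω).toReal)) Q ∧
          (∫ ω, Real.log ((Q.rnDeriv P ω).toReal) ∂Q) ≤ -Real.log ε ∧
          y = ((∫ ω, -X ω ∂Q : ℝ) : EReal)}
      ≤ ⨅ s : {s : ℝ // 0 < s},
          (((1 / (s : ℝ)) * (Real.log (∫ ω, Real.exp (-(s : ℝ) * X ω) ∂P)
            - Real.log ε) : ℝ) : EReal) := by
  refine sSup_le ?_
  rintro y ⟨Q, hQprob, hQP, hLint, hKL, rfl⟩
  refine le_iInf ?_
  rintro ⟨s, hs⟩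
  rw [EReal.coe_le_coe_iff]
  have key := dv_aux P Q hQP (fun ω => -s * X ω) (measurable_const.mul hX)
    (s * C) (fun ω => by
      rw [abs_mul, abs_neg, abs_of_pos hs]
      exact mul_le_mul_of_nonneg_left (hbdd ω) hs.le) hLint
  have hint : ∫ ω, -s * X ω ∂Q = s * ∫ ω, -X ω ∂Q := by
    simp_rw [show ∀ ω, -s * X ω = s * (-X ω) from fun ω => by ring, integral_const_mul]
  rw [hint] at key
  have : s * ∫ ω, -X ω ∂Q ≤ Real.log (∫ ω, Real.exp (-s * X ω) ∂P) - Real.log ε := by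
    have := sub_le_sub key (le_refl (0:ℝ))
    nlinarith [hKL, key]
  calc (∫ ω, -X ω ∂Q) = (1 / s) * (s * ∫ ω, -X ω ∂Q) := by field_simp
    _ ≤ (1 / s) * (Real.log (∫ ω, Real.exp (-s * X ω) ∂P) - Real.log ε) := by
        apply mul_le_mul_of_nonneg_left this (by positivity)
end
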